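/- Let G be a graph with girth at least 10·h·l. Suppose H₀ ⊆ G is a path of length l, and for 1 ≤ j ≤ h, H_j is obtained from H_{j-1} by adding paths of length l each of which intersects H_{j-1}. Then each H_j has diameter at most (2j+1)·l and is a tree (acyclic). -/

import Mathlib

/-!
Every vertex of `H j` lies on an added path of length `l` that meets `H (j - 1)`, hence within
distance `l` of `H (j - 1)`; so each step increases the diameter by at most `2l`.
A graph of diameter `d` and girth greater than `2d + 3` is acyclic: a cycle contains a path of
length `d + 1` starting at its base point, while the endpoints of that path are also joined by a
path of length at most `d`; the union of the two paths has at most `2d + 3` vertices, too few to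
carry a cycle, so the two paths coincide, which their lengths forbid.
With `d ≤ (2h + 1)l` the girth bound `10hl` is more than enough.
-/

namespace SimpleGraph

variable {V W : Type*} {G : SimpleGraph V}

lemma edist_map_le {G' : SimpleGraph W} (f : G →g G') (u v : V) :
    G'.edist (f u) (f v) ≤ G.edist u v := by
  by_cases hr : G.Reachable u v
  · obtain ⟨p, hp⟩ := hr.exists_walk_length_eq_edist
    rw [← hp, ← Walk.length_map f]
    exact edist_le _
  · rw [edist_eq_top_of_not_reachable hr]
    exact le_top

lemma exists_isPath_length_le_of_edist_le {u v : V} {d : ℕ} (h : G.edist u v ≤ d) :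
    ∃ p : G.Walk u v, p.IsPath ∧ p.length ≤ d := by
  have hr : G.Reachable u v := reachable_of_edist_ne_top (h.trans_lt (ENat.natCast_lt_top d)).ne
  obtain ⟨p, hp, hlen⟩ := hr.exists_path_of_dist
  refine ⟨p, hp, ?_⟩
  rw [hlen, ← Nat.cast_le (α := ℕ∞), hr.coe_dist_eq_edist]
  exact h

namespace Walk

variable {u v : V}

lemma IsPath.length_lt_of_support_subset {p : G.Walk u v} (hp : p.IsPath) {L : List V}
    (h : p.support ⊆ L) : p.length < L.length := by
  simpa using (List.subperm_of_subset hp.support_nodup h).length_le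

lemma IsCycle.length_le_of_support_subset {c : G.Walk u u} (hc : c.IsCycle) {L : List V}
    (h : c.support ⊆ L) : c.length ≤ L.length := by
  have htail : c.support.tail ⊆ L := fun _ hz => h (List.mem_of_mem_tail hz)
  simpa using (List.subperm_of_subset hc.support_nodup htail).length_le

lemma ediam_coe_toSubgraph_le (p : G.Walk u v) : p.toSubgraph.coe.ediam ≤ p.length := by
  classical
  refine ediam_le_of_edist_le fun x y => ?_
  obtain ⟨w⟩ := p.toSubgraph_connected.coe x y
  have hpath := w.bypass_isPath.map (Subgraph.hom_injective (x := p.toSubgraph))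
  have hsupp : (w.bypass.map p.toSubgraph.hom).support ⊆ p.support := by
    intro z hz
    rw [support_map, List.mem_map] at hz
    obtain ⟨z, -, rfl⟩ := hz
    exact (p.mem_verts_toSubgraph).mp z.2
  calc p.toSubgraph.coe.edist x y ≤ w.bypass.length := edist_le _
    _ ≤ p.length := by
      have := hpath.length_lt_of_support_subset hsupp
      rw [length_map, length_support] at this
      exact_mod_cast Nat.lt_succ_iff.mp this

lemma IsPath.eq_of_length_add_length_lt_egirth {p q : G.Walk u v} (hp : p.IsPath)
    (hq : q.IsPath) (h : ((p.length + q.length + 2 : ℕ) : ℕ∞) < G.egirth) : p = q := by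
  set D := p.toSubgraph ⊔ q.toSubgraph
  have hD : D.coe.IsAcyclic := by
    intro x c hc
    have hc' := hc.map (Subgraph.hom_injective (x := D))
    have hsupp : (c.map D.hom).support ⊆ p.support ++ q.support := by
      intro z hz
      rw [support_map, List.mem_map] at hz
      obtain ⟨z, -, rfl⟩ := hz
      rcases z.2 with hz | hz
      · exact List.mem_append_left _ ((p.mem_verts_toSubgraph).mp hz)
      · exact List.mem_append_right _ ((q.mem_verts_toSubgraph).mp hz)
    have hle : (c.map D.hom).length ≤ p.length + q.length + 2 := by
      have := hc'.length_le_of_support_subset hsupp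
      simp only [List.length_append, length_support] at this
      omega
    exact (egirth_le_length hc').not_gt ((Nat.cast_le.mpr hle).trans_lt h)
  let p' := p.mapToSubgraph.map (Subgraph.inclusion (le_sup_left : p.toSubgraph ≤ D))
  let q' := q.mapToSubgraph.map (Subgraph.inclusion (le_sup_right : q.toSubgraph ≤ D))
  have hp' : p'.map D.hom = p := by
    simp only [p', map_map]
    exact p.map_mapToSubgraph_hom
  have hq' : q'.map D.hom = q := by
    simp only [q', map_map]
    exact q.map_mapToSubgraph_hom
  have hp'_path : p'.IsPath := .of_map (f := D.hom) (by rw [hp']; exact hp)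
  have hq'_path : q'.IsPath := .of_map (f := D.hom) (by rw [hq']; exact hq)
  have hpq : p' = q' := congrArg Subtype.val <|
    (hD.subsingleton_path _ _).elim ⟨p', hp'_path⟩ ⟨q', hq'_path⟩
  exact hp'.symm.trans ((congrArg (Walk.map D.hom) hpq).trans hq')

end Walk

lemma isAcyclic_of_ediam_le_of_lt_egirth {d : ℕ} (hd : G.ediam ≤ d)
    (hg : ((2 * d + 3 : ℕ) : ℕ∞) < G.egirth) : G.IsAcyclic := by
  intro x c hc
  have hlen : 2 * d + 3 < c.length := by exact_mod_cast hg.trans_le (egirth_le_length hc)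
  have hP := hc.isPath_take (n := d + 1) (by omega)
  obtain ⟨Q, hQ, hQlen⟩ := exists_isPath_length_le_of_edist_le (edist_le_ediam.trans hd)
  have hPlen : (c.take (d + 1)).length = d + 1 := by rw [Walk.take_length]; omega
  have := congrArg Walk.length (hP.eq_of_length_add_length_lt_egirth hQ
    (lt_of_le_of_lt (Nat.cast_le.mpr (by omega)) hg))
  omega

lemma dist_le_of_ediam_le {d : ℕ} (hd : G.ediam ≤ d) (u v : V) : G.dist u v ≤ d := by
  have hr := preconnected_of_ediam_ne_top (hd.trans_lt (ENat.natCast_lt_top d)).ne u v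
  exact_mod_cast hr.coe_dist_eq_edist ▸ edist_le_ediam.trans hd

lemma isTree_of_ediam_le_of_lt_egirth [Nonempty V] {d : ℕ} (hd : G.ediam ≤ d)
    (hg : ((2 * d + 3 : ℕ) : ℕ∞) < G.egirth) : G.IsTree :=
  ⟨connected_of_ediam_ne_top (hd.trans_lt (ENat.natCast_lt_top d)).ne,
    isAcyclic_of_ediam_le_of_lt_egirth hd hg⟩

namespace Subgraph

lemma ediam_coe_le_of_forall_exists_edist_le {H H' : G.Subgraph} (hle : H ≤ H') {d l : ℕ∞}
    (hH : H.coe.ediam ≤ d)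
    (hnear : ∀ x : H'.verts, ∃ z : H.verts, H'.coe.edist x (inclusion hle z) ≤ l) :
    H'.coe.ediam ≤ d + 2 * l := by
  refine ediam_le_of_edist_le fun x y => ?_
  obtain ⟨zx, hx⟩ := hnear x
  obtain ⟨zy, hy⟩ := hnear y
  have hz : H'.coe.edist (inclusion hle zx) (inclusion hle zy) ≤ d :=
    (edist_map_le _ zx zy).trans (edist_le_ediam.trans hH)
  calc H'.coe.edist x y
      ≤ H'.coe.edist x (inclusion hle zx) + H'.coe.edist (inclusion hle zx) (inclusion hle zy)
        + H'.coe.edist (inclusion hle zy) y :=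
        SimpleGraph.edist_triangle.trans (add_le_add_left SimpleGraph.edist_triangle _)
    _ ≤ l + d + l := by rw [edist_comm (u := inclusion hle zy)]; gcongr
    _ = d + 2 * l := by ring

lemma exists_edist_le_of_mem_sup_sSup {H : G.Subgraph} {S : Set G.Subgraph} {l : ℕ∞}
    (hS : ∀ K ∈ S, K.coe.ediam ≤ l ∧ (K.verts ∩ H.verts).Nonempty)
    (x : (H ⊔ sSup S).verts) :
    ∃ z : H.verts, (H ⊔ sSup S).coe.edist x (inclusion le_sup_left z) ≤ l := by
  obtain ⟨x, hx | hx⟩ := x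
  · exact ⟨⟨x, hx⟩, (edist_eq_zero_iff.mpr rfl).trans_le zero_le⟩
  · obtain ⟨K, hK, hxK⟩ := Set.mem_iUnion₂.mp (verts_sSup S ▸ hx)
    obtain ⟨hdiam, z, hzK, hzH⟩ := hS K hK
    have hKle : K ≤ H ⊔ sSup S := (le_sSup hK).trans le_sup_right
    exact ⟨⟨z, hzH⟩, (edist_map_le (inclusion hKle) ⟨x, hxK⟩ ⟨z, hzK⟩).trans
      (edist_le_ediam.trans hdiam)⟩

lemma ediam_coe_sup_sSup_le {H : G.Subgraph} {S : Set G.Subgraph} {d l : ℕ∞}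
    (hH : H.coe.ediam ≤ d)
    (hS : ∀ K ∈ S, K.coe.ediam ≤ l ∧ (K.verts ∩ H.verts).Nonempty) :
    (H ⊔ sSup S).coe.ediam ≤ d + 2 * l :=
  ediam_coe_le_of_forall_exists_edist_le le_sup_left hH (exists_edist_le_of_mem_sup_sSup hS)

end Subgraph

end SimpleGraph

open SimpleGraph in
/-- Let `G` have girth at least `10·h·l`. Suppose `H 0 ⊆ G` is a path of length `l`, and
for `1 ≤ j ≤ h`, `H j` is obtained from `H (j-1)` by adding a collection of paths of
length `l`, each sharing a vertex with `H (j-1)`. Then each `H j` (`j ≤ h`) is a tree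
and has diameter at most `(2j+1)·l`. -/
theorem stmt16 {V : Type*} (G : SimpleGraph V) (h l : ℕ) (hh : 1 ≤ h) (hl : 1 ≤ l)
    (hgirth : ((10 * h * l : ℕ) : ℕ∞) ≤ G.girth)
    (H : ℕ → G.Subgraph)
    (h0 : ∃ (u v : V) (p : G.Walk u v), p.IsPath ∧ p.length = l ∧ H 0 = p.toSubgraph)
    (hstep : ∀ j, 1 ≤ j → j ≤ h → ∃ S : Set G.Subgraph,
      (∀ W ∈ S, (∃ (u v : V) (p : G.Walk u v),
            p.IsPath ∧ p.length = l ∧ W = p.toSubgraph) ∧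
          (W.verts ∩ (H (j - 1)).verts).Nonempty) ∧
      H j = H (j - 1) ⊔ sSup S) :
    ∀ j ≤ h, (H j).coe.IsTree ∧
      ∀ x y : (H j).verts, (H j).coe.dist x y ≤ (2 * j + 1) * l := by
  have hdiam : ∀ j ≤ h,
      (H j).verts.Nonempty ∧ (H j).coe.ediam ≤ ((2 * j + 1) * l : ℕ) := by
    intro j
    induction j with
    | zero =>
      obtain ⟨u, v, p, -, hpl, hH0⟩ := h0
      intro _
      rw [hH0]
      refine ⟨⟨u, p.start_mem_verts_toSubgraph⟩, ?_⟩
      simpa [hpl] using p.ediam_coe_toSubgraph_le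
    | succ j ih =>
      intro hj
      obtain ⟨hne, hd⟩ := ih (by omega)
      obtain ⟨S, hS, hHj⟩ := hstep (j + 1) (by omega) hj
      rw [Nat.add_sub_cancel] at hS hHj
      rw [hHj]
      refine ⟨hne.mono (le_sup_left : H j ≤ _).1, ?_⟩
      convert Subgraph.ediam_coe_sup_sSup_le (l := l) hd fun K hK => ?_ using 1
      · push_cast
        ring
      · obtain ⟨⟨u, v, p, -, hpl, rfl⟩, hmeet⟩ := hS K hK
        exact ⟨hpl ▸ p.ediam_coe_toSubgraph_le, hmeet⟩
  intro j hj
  obtain ⟨hne, hd⟩ := hdiam j hj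
  have : Nonempty (H j).verts := hne.to_subtype
  have hegirth : ((10 * h * l : ℕ) : ℕ∞) ≤ (H j).coe.egirth :=
    (hgirth.trans (ENat.natCast_toNat_le_self _)).trans (H j).coe_isContained.egirth_le
  have hlt : 2 * ((2 * j + 1) * l) + 3 < 10 * h * l := by
    have : j * l ≤ h * l := Nat.mul_le_mul_right l hj
    have : l ≤ h * l := Nat.le_mul_of_pos_left l hh
    nlinarith
  exact ⟨isTree_of_ediam_le_of_lt_egirth hd ((Nat.cast_lt.mpr hlt).trans_le hegirth),
    dist_le_of_ediam_le hd⟩
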